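/- arXiv:2410.18116 — 2 statements merged into one kernel-verified Lean document; each statement's English description precedes it below -/
import Mathlib

section
/- For p ≥ 2 and all x, y ∈ ℝ^m, the inequality ‖x + y‖_p^2 ≤ ‖x‖_p^2 + 2⟨J(x), y⟩ + (p-1)‖y‖_p^2 holds, where (J(x))_i = ‖x‖_p^{2-p} |x_i|^{p-1} sign(x_i). -/
/-!
Along the line `t ↦ x + t • y` put `N t = ∑ |xᵢ + t yᵢ|^p`, so that `φ = N^{2/p}` is the squared
norm. Then `φ' = 2 N^{(2-p)/p} S` with `S t = ⟨|x + t y|^{p-2} (x + t y), y⟩`, whose value at `0` is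
`2 ⟨J x, y⟩`, and
`φ'' = 2 ((2 - p) N^{(2-2p)/p} S² + (p - 1) N^{(2-p)/p} ∑ |xᵢ + t yᵢ|^{p-2} yᵢ²)`.
The first term is `≤ 0` because `p ≥ 2`, and Hölder with exponents `p/(p-2)` and `p/2` bounds the
second by `(p - 1) ‖y‖_p²`; a second-order Taylor bound finishes. This needs `N > 0` on the whole
line; when the line passes through `0`, `x` is a multiple of `y` and the inequality follows from
the homogeneity of the norm and of `J`.
-/

noncomputable section

def pnorm (p : ℝ) {m : ℕ} (x : Fin m → ℝ) : ℝ :=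
  (∑ i, |x i| ^ p) ^ (1 / p)

def Jmap (p : ℝ) {m : ℕ} (x : Fin m → ℝ) : Fin m → ℝ :=
  fun i => pnorm p x ^ (2 - p) * |x i| ^ (p - 1) * Real.sign (x i)

end

open Real Finset

theorem hasDerivAt_abs_rpow_mul_self {r : ℝ} (hr : 0 ≤ r) (s : ℝ) :
    HasDerivAt (fun s : ℝ => |s| ^ r * s) ((r + 1) * |s| ^ r) s := by
  rcases eq_or_ne s 0 with rfl | hs
  · have hval : (r + 1) * |(0 : ℝ)| ^ r = |(0 : ℝ)| ^ r := by
      rcases hr.eq_or_lt with rfl | hr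
      · ring
      · simp [zero_rpow hr.ne']
    rw [hasDerivAt_iff_tendsto_slope, hval]
    refine ((continuous_abs.continuousAt.rpow_const (Or.inr hr)).tendsto.mono_left
      nhdsWithin_le_nhds).congr' ?_
    filter_upwards [self_mem_nhdsWithin] with h (hh : h ≠ 0)
    simp [slope_def_field, hh]
  · refine (((hasDerivAt_abs hs).rpow_const (p := r) (Or.inl (abs_ne_zero.2 hs))).fun_mul
      (hasDerivAt_id' s)).congr_deriv ?_
    have hpow : (SignType.sign s : ℝ) * |s| ^ (r - 1) * s = |s| ^ r := by
      rw [mul_right_comm, sign_mul_self, rpow_sub_one (abs_ne_zero.2 hs),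
        mul_div_cancel₀ _ (abs_ne_zero.2 hs)]
    linear_combination r * hpow

theorem le_add_deriv_mul_add_of_deriv2_le {f f' f'' : ℝ → ℝ} {C a b : ℝ}
    (hf : ∀ t, HasDerivAt f (f' t) t) (hf' : ∀ t, HasDerivAt f' (f'' t) t)
    (hC : ∀ t, f'' t ≤ C) (hab : a < b) :
    f b ≤ f a + f' a * (b - a) + C / 2 * (b - a) ^ 2 := by
  set g : ℝ → ℝ := fun t => C / 2 * (t - a) ^ 2 - f t
  have hg (t : ℝ) : HasDerivAt g (C * (t - a) - f' t) t := by
    refine ((((hasDerivAt_id' t).sub_const a).fun_pow 2).const_mul (C / 2)).fun_sub (hf t)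
      |>.congr_deriv ?_
    ring
  have hg' (t : ℝ) : HasDerivAt (fun t => C * (t - a) - f' t) (C - f'' t) t := by
    simpa using (((hasDerivAt_id' t).sub_const a).const_mul C).fun_sub (hf' t)
  have hconv : ConvexOn ℝ Set.univ g :=
    convexOn_of_hasDerivWithinAt2_nonneg convex_univ
      (fun t _ => (hg t).continuousAt.continuousWithinAt)
      (fun t _ => (hg t).hasDerivWithinAt) (fun t _ => (hg' t).hasDerivWithinAt)
      (fun t _ => sub_nonneg.2 (hC t))
  have hslope := hconv.le_slope_of_hasDerivAt (Set.mem_univ a) (Set.mem_univ b) hab (hg a)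
  rw [slope_def_field, le_div_iff₀ (sub_pos.2 hab)] at hslope
  simp only [g, sub_self] at hslope
  nlinarith

theorem rpow_two_div_le_of_hasDerivAt {N S Q : ℝ → ℝ} {p K : ℝ} (hp : 2 ≤ p)
    (hN : ∀ t, 0 < N t) (hNd : ∀ t, HasDerivAt N (p * S t) t)
    (hSd : ∀ t, HasDerivAt S ((p - 1) * Q t) t) (hQ : ∀ t, Q t ≤ N t ^ ((p - 2) / p) * K) :
    N 1 ^ (2 / p) ≤ N 0 ^ (2 / p) + 2 * (N 0 ^ ((2 - p) / p) * S 0) + (p - 1) * K := by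
  have hp0 : p ≠ 0 := by positivity
  have hφ (t : ℝ) :
      HasDerivAt (fun t => N t ^ (2 / p)) (2 * (N t ^ ((2 - p) / p) * S t)) t := by
    refine ((hNd t).rpow_const (Or.inl (hN t).ne')).congr_deriv ?_
    rw [show 2 / p - 1 = (2 - p) / p by field_simp]
    field_simp
  have hφ' (t : ℝ) : HasDerivAt (fun t => 2 * (N t ^ ((2 - p) / p) * S t))
      (2 * ((2 - p) * N t ^ ((2 - p) / p - 1) * S t ^ 2
        + (p - 1) * (N t ^ ((2 - p) / p) * Q t))) t := by
    refine ((((hNd t).rpow_const (Or.inl (hN t).ne')).fun_mul (hSd t)).const_mul 2).congr_deriv ?_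
    field_simp
  have hφ'_le (t : ℝ) : 2 * ((2 - p) * N t ^ ((2 - p) / p - 1) * S t ^ 2
      + (p - 1) * (N t ^ ((2 - p) / p) * Q t)) ≤ 2 * (p - 1) * K := by
    have hneg : (2 - p) * N t ^ ((2 - p) / p - 1) * S t ^ 2 ≤ 0 :=
      mul_nonpos_of_nonpos_of_nonneg (mul_nonpos_of_nonpos_of_nonneg (by linarith)
        (rpow_nonneg (hN t).le _)) (sq_nonneg _)
    have hQK : N t ^ ((2 - p) / p) * Q t ≤ K := calc
      N t ^ ((2 - p) / p) * Q t ≤ N t ^ ((2 - p) / p) * (N t ^ ((p - 2) / p) * K) :=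
        mul_le_mul_of_nonneg_left (hQ t) (rpow_nonneg (hN t).le _)
      _ = K := by
        rw [← mul_assoc, ← rpow_add (hN t), ← add_div, sub_add_sub_cancel', sub_self, zero_div,
          rpow_zero, one_mul]
    nlinarith
  have := le_add_deriv_mul_add_of_deriv2_le hφ hφ' hφ'_le zero_lt_one
  linarith

theorem sum_abs_rpow_mul_sq_le {ι : Type*} (s : Finset ι) {p : ℝ} (hp : 2 ≤ p) (u v : ι → ℝ) :
    ∑ i ∈ s, |u i| ^ (p - 2) * v i ^ 2 ≤
      (∑ i ∈ s, |u i| ^ p) ^ ((p - 2) / p) * (∑ i ∈ s, |v i| ^ p) ^ (2 / p) := by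
  rcases hp.eq_or_lt with rfl | hp
  · simp
  have hpq : HolderConjugate (p / (p - 2)) (p / 2) := by
    rw [holderConjugate_iff, inv_div, inv_div, ← add_div, sub_add_cancel,
      div_self (by linarith), lt_div_iff₀ (by linarith)]
    exact ⟨by linarith, rfl⟩
  have holder := inner_le_Lp_mul_Lq_of_nonneg s hpq (f := fun i => |u i| ^ (p - 2))
    (g := fun i => v i ^ 2) (fun i _ => by positivity) (fun i _ => by positivity)
  have hu (i : ι) : (|u i| ^ (p - 2)) ^ (p / (p - 2)) = |u i| ^ p := by
    rw [← rpow_mul (abs_nonneg _), mul_div_cancel₀ _ (by linarith)]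
  have hv (i : ι) : (v i ^ 2) ^ (p / 2) = |v i| ^ p := by
    rw [← sq_abs, ← rpow_natCast, ← rpow_mul (abs_nonneg _), Nat.cast_ofNat,
      mul_div_cancel₀ _ two_ne_zero]
  simpa only [hu, hv, one_div_div] using holder

section Line

variable {ι : Type*} [Fintype ι] {p : ℝ} (x y : ι → ℝ)

theorem hasDerivAt_sum_abs_rpow (hp : 1 < p) (t : ℝ) :
    HasDerivAt (fun t => ∑ i, |x i + t * y i| ^ p)
      (p * ∑ i, |x i + t * y i| ^ (p - 2) * (x i + t * y i) * y i) t := by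
  rw [mul_sum]
  refine HasDerivAt.fun_sum fun i _ => ?_
  refine ((hasDerivAt_abs_rpow _ hp).comp t
    (((hasDerivAt_id' t).mul_const (y i)).const_add (x i))).congr_deriv ?_
  ring

theorem hasDerivAt_sum_abs_rpow_mul (hp : 2 ≤ p) (t : ℝ) :
    HasDerivAt (fun t => ∑ i, |x i + t * y i| ^ (p - 2) * (x i + t * y i) * y i)
      ((p - 1) * ∑ i, |x i + t * y i| ^ (p - 2) * y i ^ 2) t := by
  rw [mul_sum]
  refine HasDerivAt.fun_sum fun i _ => ?_
  refine (((hasDerivAt_abs_rpow_mul_self (sub_nonneg.2 hp) _).comp t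
    (((hasDerivAt_id' t).mul_const (y i)).const_add (x i))).mul_const (y i)).congr_deriv ?_
  ring

theorem sum_abs_add_rpow_le (hp : 2 ≤ p) (hxy : ∀ t : ℝ, x + t • y ≠ 0) :
    (∑ i, |x i + y i| ^ p) ^ (2 / p) ≤ (∑ i, |x i| ^ p) ^ (2 / p)
      + 2 * ((∑ i, |x i| ^ p) ^ ((2 - p) / p) * ∑ i, |x i| ^ (p - 2) * x i * y i)
      + (p - 1) * (∑ i, |y i| ^ p) ^ (2 / p) := by
  have hN (t : ℝ) : 0 < ∑ i, |x i + t * y i| ^ p := by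
    obtain ⟨i, hi⟩ := Function.ne_iff.1 (hxy t)
    exact sum_pos' (fun j _ => by positivity)
      ⟨i, mem_univ i, rpow_pos_of_pos (abs_pos.2 (by simpa using hi)) p⟩
  simpa using rpow_two_div_le_of_hasDerivAt hp hN
    (hasDerivAt_sum_abs_rpow x y (by linarith)) (hasDerivAt_sum_abs_rpow_mul x y hp)
    (fun t => sum_abs_rpow_mul_sq_le _ hp _ y)

end Line

theorem abs_rpow_sub_one_mul_sign (a p : ℝ) :
    |a| ^ (p - 1) * Real.sign a = |a| ^ (p - 2) * a := by
  rcases lt_trichotomy a 0 with ha | rfl | ha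
  · rw [Real.sign_of_neg ha, abs_of_neg ha, show p - 1 = p - 2 + 1 by ring,
      rpow_add_one (by linarith)]
    ring
  · simp [Real.sign_zero]
  · rw [Real.sign_of_pos ha, abs_of_pos ha, show p - 1 = p - 2 + 1 by ring,
      rpow_add_one ha.ne']
    ring

section Pnorm

variable {p : ℝ} {m : ℕ}

theorem pnorm_nonneg (x : Fin m → ℝ) : 0 ≤ pnorm p x := by
  unfold pnorm
  positivity

theorem pnorm_rpow (x : Fin m → ℝ) (q : ℝ) : pnorm p x ^ q = (∑ i, |x i| ^ p) ^ (q / p) := by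
  rw [pnorm, ← rpow_mul (by positivity), one_div_mul_eq_div]

theorem pnorm_smul (hp : 0 < p) (c : ℝ) (x : Fin m → ℝ) : pnorm p (c • x) = |c| * pnorm p x := by
  simp only [pnorm, Pi.smul_apply, smul_eq_mul, abs_mul, mul_rpow (abs_nonneg c) (abs_nonneg _),
    ← mul_sum]
  rw [mul_rpow (by positivity) (by positivity), ← rpow_mul (abs_nonneg c),
    mul_one_div_cancel hp.ne', rpow_one]

theorem Jmap_apply (x : Fin m → ℝ) (i : Fin m) :
    Jmap p x i = pnorm p x ^ (2 - p) * (|x i| ^ (p - 2) * x i) := by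
  rw [Jmap, mul_assoc, abs_rpow_sub_one_mul_sign]

theorem sum_Jmap_mul (x y : Fin m → ℝ) :
    ∑ i, Jmap p x i * y i =
      (∑ i, |x i| ^ p) ^ ((2 - p) / p) * ∑ i, |x i| ^ (p - 2) * x i * y i := by
  simp only [Jmap_apply, pnorm_rpow, mul_sum, mul_assoc]

theorem sum_Jmap_mul_self (hp : 0 < p) (x : Fin m → ℝ) :
    ∑ i, Jmap p x i * x i = pnorm p x ^ (2 : ℝ) := by
  have hself (i : Fin m) : |x i| ^ (p - 2) * x i * x i = |x i| ^ p := by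
    rw [mul_assoc, ← sq, ← sq_abs, ← rpow_natCast,
      ← rpow_add' (abs_nonneg _) (by norm_num; positivity)]
    norm_num
  have hexp : (2 - p) / p + 1 = 2 / p := by field_simp; ring
  rw [sum_Jmap_mul, sum_congr rfl fun i _ => hself i, pnorm_rpow,
    ← rpow_add_one' (by positivity) (by rw [hexp]; positivity), hexp]

theorem Jmap_smul (hp : 0 < p) (c : ℝ) (x : Fin m → ℝ) : Jmap p (c • x) = c • Jmap p x := by
  ext i
  rcases eq_or_ne c 0 with rfl | hc
  · simp [Jmap_apply]
  have hc' : |c| ^ (2 - p) * |c| ^ (p - 2) = 1 := by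
    rw [← rpow_add (abs_pos.2 hc), sub_add_sub_cancel', sub_self, rpow_zero]
  simp only [Jmap_apply, pnorm_smul hp, Pi.smul_apply, smul_eq_mul, abs_mul,
    mul_rpow (abs_nonneg c) (abs_nonneg _), mul_rpow (abs_nonneg c) (pnorm_nonneg x)]
  linear_combination (pnorm p x ^ (2 - p) * (|x i| ^ (p - 2) * x i) * c) * hc'

theorem two_uniform_smoothness_smul (hp : 2 ≤ p) (c : ℝ) (y : Fin m → ℝ) :
    pnorm p (c • y + y) ^ (2 : ℝ) ≤
      pnorm p (c • y) ^ (2 : ℝ) + 2 * (∑ i, Jmap p (c • y) i * y i)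
        + (p - 1) * pnorm p y ^ (2 : ℝ) := by
  have hp0 : 0 < p := by linarith
  have hJ : ∑ i, Jmap p (c • y) i * y i = c * pnorm p y ^ (2 : ℝ) := by
    simp only [Jmap_smul hp0, Pi.smul_apply, smul_eq_mul, mul_assoc, ← mul_sum,
      sum_Jmap_mul_self hp0]
  rw [show c • y + y = (c + 1) • y by rw [add_smul, one_smul], hJ, pnorm_smul hp0,
    pnorm_smul hp0, rpow_two, rpow_two, rpow_two, mul_pow, mul_pow, sq_abs, sq_abs]
  nlinarith [sq_nonneg (pnorm p y)]

end Pnorm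

/-- for p ≥ 2, ‖x+y‖_p² ≤ ‖x‖_p² + 2⟨J(x), y⟩ + (p-1)‖y‖_p². -/
theorem lp_two_uniform_smoothness (p : ℝ) (hp : 2 ≤ p) (m : ℕ) (x y : Fin m → ℝ) :
    pnorm p (x + y) ^ (2 : ℝ) ≤
      pnorm p x ^ (2 : ℝ) + 2 * (∑ i, Jmap p x i * y i) + (p - 1) * pnorm p y ^ (2 : ℝ) := by
  by_cases hpar : ∃ c : ℝ, x = c • y
  · obtain ⟨c, rfl⟩ := hpar
    exact two_uniform_smoothness_smul hp c y
  have hxy (t : ℝ) : x + t • y ≠ 0 := fun h =>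
    hpar ⟨-t, by rw [neg_smul, ← eq_neg_iff_add_eq_zero.2 h]⟩
  simp only [pnorm_rpow, sum_Jmap_mul, Pi.add_apply]
  exact sum_abs_add_rpow_le x y hp hxy
end

section
/- Let ω ∈ [θ,1]^N, θ ∈ (0,1), and suppose A ∈ ℂ^{m×N} satisfies the weighted robust null space property ω-RNSP_{p,q} of order s with constants ρ ∈ (0,1), γ > 0, for p, q ∈ [1,∞]. Then for any 1 ≤ r ≤ q, any x ∈ ℂ^N, and any minimizer x̂ of min_z ‖z‖_{ω,1} subject to ‖Az − y‖_p ≤ ε (with ‖Ax − y‖_p ≤ ε), one has ‖x̂ − x‖_r ≤ A'·s^{1/r−1/q}·ε + B'·s^{1/r−1}·σ_s(x)_{ω,1}, where A', B' depend only on ρ, γ, θ. -/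
noncomputable section

open scoped ENNReal

/-- The ℓ_p norm of a complex vector for p ∈ [1,∞] (extended exponent). -/
def cnormE (p : ℝ≥0∞) {n : ℕ} (x : Fin n → ℂ) : ℝ :=
  if p = ⊤ then ⨆ i, ‖x i‖
  else (∑ i, ‖x i‖ ^ p.toReal) ^ (1 / p.toReal)

/-- The weighted ℓ_1 norm ‖x‖_{ω,1} = ∑ i, ω i * |x i|. -/
def wnorm {n : ℕ} (ω : Fin n → ℝ) (x : Fin n → ℂ) : ℝ :=
  ∑ i, ω i * ‖x i‖

/-- Restriction of x to an index set S (zero outside S). -/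
def restrict {n : ℕ} (S : Finset (Fin n)) (x : Fin n → ℂ) : Fin n → ℂ :=
  fun i => if i ∈ S then x i else 0

/-- x is s-sparse. -/
def CSparse {n : ℕ} (s : ℕ) (x : Fin n → ℂ) : Prop :=
  (Finset.univ.filter fun i => x i ≠ 0).card ≤ s

/-- Best weighted s-term approximation error σ_s(x)_{ω,1}. -/
def sigmaS {n : ℕ} (s : ℕ) (ω : Fin n → ℝ) (x : Fin n → ℂ) : ℝ :=
  sInf {t | ∃ z : Fin n → ℂ, CSparse s z ∧ t = wnorm ω (x - z)}

/-- A satisfies the weighted robust null space property ω-RNSP_{p,q} of order s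
with constants ρ and γ. -/
def wRNSP {m N : ℕ} (p q : ℝ≥0∞) (ω : Fin N → ℝ) (s : ℕ) (ρ γ : ℝ)
    (A : Matrix (Fin m) (Fin N) ℂ) : Prop :=
  ∀ (v : Fin N → ℂ) (S : Finset (Fin N)), S.card ≤ s →
    cnormE q (restrict S v) ≤
      ρ / (s : ℝ) ^ (1 - (1 / q).toReal) * wnorm ω (restrict Sᶜ v) +
        γ * cnormE p (A.mulVec v)

/-!
Write `v = x̂ - x` and let `S` be the support of an `s`-sparse competitor `z`. Minimality of `x̂`
puts `v` in the cone `‖v_{Sᶜ}‖_{ω,1} ≤ ‖v_S‖_{ω,1} + 2‖x_{Sᶜ}‖_{ω,1}`; combined with the null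
space property in its `ℓ₁` form `‖v_S‖₁ ≤ ρ‖v_{Sᶜ}‖_{ω,1} + γ s^{1-1/q}‖Av‖_p` (power means on
`S`), this bounds `‖v‖_{ω,1}` by `γ s^{1-1/q}‖Av‖_p` and `‖x - z‖_{ω,1}`.

For the `ℓ_r` error split `v` over the set `T` of at most `s` coordinates with `s|v_i| > ‖v‖₁`.
On `T`, compare `ℓ_r` with `ℓ_q` and apply the null space property once more; off `T` every
entry is at most `‖v‖₁ / s`, so `‖v_{Tᶜ}‖_r ≤ s^{1/r-1}‖v‖₁ ≤ s^{1/r-1}‖v‖_{ω,1} / θ`.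
Finally `‖Av‖_p ≤ 2ε`, and `z` is arbitrary.
-/

theorem Real.Lp_le_card_rpow_mul_Lq_of_nonneg {ι : Type*} (s : Finset ι) {f : ι → ℝ}
    (hf : ∀ i ∈ s, 0 ≤ f i) {p q : ℝ} (hp : 0 < p) (hpq : p ≤ q) :
    (∑ i ∈ s, f i ^ p) ^ (1 / p) ≤
      (s.card : ℝ) ^ (1 / p - 1 / q) * (∑ i ∈ s, f i ^ q) ^ (1 / q) := by
  have hq : 0 < q := hp.trans_le hpq
  have hfp : ∀ i ∈ s, 0 ≤ f i ^ p := fun i hi => Real.rpow_nonneg (hf i hi) p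
  have hpow : ∀ i ∈ s, (f i ^ p) ^ (q / p) = f i ^ q := fun i hi => by
    rw [← Real.rpow_mul (hf i hi), mul_div_cancel₀ q hp.ne']
  have hmean := Real.rpow_sum_le_const_mul_sum_rpow_of_nonneg s
    ((one_le_div hp).mpr hpq) hfp
  rw [Finset.sum_congr rfl hpow] at hmean
  have hsum : 0 ≤ ∑ i ∈ s, f i ^ p := Finset.sum_nonneg hfp
  calc (∑ i ∈ s, f i ^ p) ^ (1 / p) = ((∑ i ∈ s, f i ^ p) ^ (q / p)) ^ (1 / q) := by
        rw [← Real.rpow_mul hsum]; field_simp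
    _ ≤ ((s.card : ℝ) ^ (q / p - 1) * ∑ i ∈ s, f i ^ q) ^ (1 / q) := by gcongr
    _ = (s.card : ℝ) ^ (1 / p - 1 / q) * (∑ i ∈ s, f i ^ q) ^ (1 / q) := by
        rw [Real.mul_rpow (by positivity) (Finset.sum_nonneg fun i hi =>
          Real.rpow_nonneg (hf i hi) q), ← Real.rpow_mul (by positivity)]
        congr 2
        field_simp

namespace ENNReal

variable {r q : ℝ≥0∞}

theorem toReal_one_div_le_one (hr : 1 ≤ r) : (1 / r).toReal ≤ 1 :=
  toReal_le_of_le_ofReal zero_le_one (by simpa using ENNReal.inv_le_one.mpr hr)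

theorem toReal_one_div_le_toReal_one_div (hr : 1 ≤ r) (hrq : r ≤ q) :
    (1 / q).toReal ≤ (1 / r).toReal :=
  toReal_mono (by simpa using (zero_lt_one.trans_le hr).ne') (ENNReal.div_le_div_left hrq 1)

end ENNReal

section LpNorm

variable {n : ℕ}

theorem cnormE_eq_norm_toLp {p : ℝ≥0∞} (hp : 1 ≤ p) (x : Fin n → ℂ) :
    cnormE p x = ‖WithLp.toLp p x‖ := by
  rcases eq_or_ne p ⊤ with rfl | hp_top
  · simp [cnormE, PiLp.norm_eq_ciSup]
  · rw [cnormE, if_neg hp_top, PiLp.norm_eq_sum (ENNReal.toReal_pos (by positivity) hp_top)]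

theorem cnormE_nonneg {p : ℝ≥0∞} (hp : 1 ≤ p) (x : Fin n → ℂ) : 0 ≤ cnormE p x := by
  have : Fact (1 ≤ p) := ⟨hp⟩
  exact cnormE_eq_norm_toLp hp x ▸ norm_nonneg _

theorem cnormE_add_le {p : ℝ≥0∞} (hp : 1 ≤ p) (x y : Fin n → ℂ) :
    cnormE p (x + y) ≤ cnormE p x + cnormE p y := by
  have : Fact (1 ≤ p) := ⟨hp⟩
  simpa only [cnormE_eq_norm_toLp hp, WithLp.toLp_add] using norm_add_le _ _

theorem cnormE_sub_le {p : ℝ≥0∞} (hp : 1 ≤ p) (x y : Fin n → ℂ) :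
    cnormE p (x - y) ≤ cnormE p x + cnormE p y := by
  have : Fact (1 ≤ p) := ⟨hp⟩
  simpa only [cnormE_eq_norm_toLp hp, WithLp.toLp_sub] using norm_sub_le _ _

theorem cnormE_one (x : Fin n → ℂ) : cnormE 1 x = ∑ i, ‖x i‖ := by
  simp [cnormE]

theorem norm_le_cnormE_top (x : Fin n → ℂ) (i : Fin n) : ‖x i‖ ≤ cnormE ⊤ x := by
  simpa [cnormE] using le_ciSup (Finite.bddAbove_range fun j => ‖x j‖) i

theorem cnormE_of_ne_top {p : ℝ≥0∞} (hp : p ≠ ⊤) (x : Fin n → ℂ) :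
    cnormE p x = (∑ i, ‖x i‖ ^ p.toReal) ^ (1 / p.toReal) :=
  if_neg hp

theorem norm_restrict (S : Finset (Fin n)) (x : Fin n → ℂ) (i : Fin n) :
    ‖restrict S x i‖ = if i ∈ S then ‖x i‖ else 0 := by
  unfold restrict; split_ifs <;> simp

theorem cnormE_restrict_of_ne_top {p : ℝ≥0∞} (hp : 1 ≤ p) (hp_top : p ≠ ⊤)
    (S : Finset (Fin n)) (x : Fin n → ℂ) :
    cnormE p (restrict S x) = (∑ i ∈ S, ‖x i‖ ^ p.toReal) ^ (1 / p.toReal) := by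
  have hp0 : p.toReal ≠ 0 := (ENNReal.toReal_pos (by positivity) hp_top).ne'
  simp only [cnormE_of_ne_top hp_top, norm_restrict, apply_ite (· ^ p.toReal),
    Real.zero_rpow hp0, Finset.sum_ite_mem, Finset.univ_inter]

theorem restrict_add_restrict_compl (S : Finset (Fin n)) (x : Fin n → ℂ) :
    restrict S x + restrict Sᶜ x = x := by
  ext i
  by_cases hi : i ∈ S <;> simp [restrict, hi]

theorem sum_norm_restrict (S : Finset (Fin n)) (x : Fin n → ℂ) :
    ∑ i, ‖restrict S x i‖ = ∑ i ∈ S, ‖x i‖ := by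
  simp only [norm_restrict, Finset.sum_ite_mem, Finset.univ_inter]

theorem wnorm_restrict (ω : Fin n → ℝ) (S : Finset (Fin n)) (x : Fin n → ℂ) :
    wnorm ω (restrict S x) = ∑ i ∈ S, ω i * ‖x i‖ := by
  simp only [wnorm, norm_restrict, mul_ite, mul_zero, Finset.sum_ite_mem, Finset.univ_inter]

theorem cnormE_le_rpow_mul_sum_rpow {r : ℝ≥0∞} (hr : 1 ≤ r) {M : ℝ} (hM0 : 0 ≤ M)
    {x : Fin n → ℂ} (hM : ∀ i, ‖x i‖ ≤ M) :
    cnormE r x ≤ M ^ (1 - (1 / r).toReal) * (∑ i, ‖x i‖) ^ (1 / r).toReal := by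
  rcases eq_or_ne r ⊤ with rfl | hr_top
  · simpa [cnormE] using Real.iSup_le hM hM0
  have hr1 : 1 ≤ r.toReal := by simpa using ENNReal.toReal_mono hr_top hr
  have hterm : ∀ i, ‖x i‖ ^ r.toReal ≤ M ^ (r.toReal - 1) * ‖x i‖ := fun i => by
    calc ‖x i‖ ^ r.toReal = ‖x i‖ ^ (r.toReal - 1) * ‖x i‖ := by
          rw [← Real.rpow_add_one' (norm_nonneg _) (by linarith), sub_add_cancel]
      _ ≤ M ^ (r.toReal - 1) * ‖x i‖ := by
          gcongr
          exact hM i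
  have hsum : 0 ≤ ∑ i, ‖x i‖ := Finset.sum_nonneg fun i _ => norm_nonneg _
  calc cnormE r x ≤ (M ^ (r.toReal - 1) * ∑ i, ‖x i‖) ^ (1 / r.toReal) := by
        rw [cnormE_of_ne_top hr_top, Finset.mul_sum]
        gcongr with i
        exact hterm i
    _ = M ^ (1 - (1 / r).toReal) * (∑ i, ‖x i‖) ^ (1 / r).toReal := by
        rw [Real.mul_rpow (by positivity) hsum, ← Real.rpow_mul hM0,
          ENNReal.toReal_div, ENNReal.toReal_one]
        congr 2
        field_simp

end LpNorm

section HeadTail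

variable {n : ℕ}

theorem cnormE_restrict_le_card_rpow_mul {r q : ℝ≥0∞} (hr : 1 ≤ r) (hrq : r ≤ q)
    (S : Finset (Fin n)) (x : Fin n → ℂ) :
    cnormE r (restrict S x) ≤
      (S.card : ℝ) ^ ((1 / r).toReal - (1 / q).toReal) * cnormE q (restrict S x) := by
  rcases eq_or_ne q ⊤ with rfl | hq_top
  · set M := cnormE ⊤ (restrict S x)
    have hM0 : 0 ≤ M := cnormE_nonneg le_top _
    have hsum : ∑ i, ‖restrict S x i‖ ≤ S.card * M := by
      rw [sum_norm_restrict]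
      simpa using Finset.sum_le_card_nsmul S _ M fun i hi => by
        simpa [norm_restrict, hi] using norm_le_cnormE_top (restrict S x) i
    calc cnormE r (restrict S x)
        ≤ M ^ (1 - (1 / r).toReal) * (S.card * M) ^ (1 / r).toReal := by
          grw [cnormE_le_rpow_mul_sum_rpow hr hM0 (norm_le_cnormE_top _), hsum]
      _ = (S.card : ℝ) ^ ((1 / r).toReal - (1 / ⊤ : ℝ≥0∞).toReal) * M := by
          rw [Real.mul_rpow (by positivity) hM0, mul_left_comm, ← Real.rpow_add' hM0 (by simp)]
          simp
  have hr_top : r ≠ ⊤ := ne_top_of_le_ne_top hq_top hrq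
  have hr0 : 0 < r.toReal := ENNReal.toReal_pos (by positivity) hr_top
  rw [cnormE_restrict_of_ne_top hr hr_top, cnormE_restrict_of_ne_top (hr.trans hrq) hq_top,
    ENNReal.toReal_div, ENNReal.toReal_div, ENNReal.toReal_one]
  exact Real.Lp_le_card_rpow_mul_Lq_of_nonneg S (fun i _ => norm_nonneg _) hr0
    (ENNReal.toReal_mono hq_top hrq)

/-- Stands in for the set of the `s` largest entries of `x`, without any sorting. -/
def largeCoords (s : ℕ) (x : Fin n → ℂ) : Finset (Fin n) :=
  Finset.univ.filter fun j => ∑ i, ‖x i‖ < s * ‖x j‖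

theorem card_largeCoords_le (s : ℕ) (x : Fin n → ℂ) : (largeCoords s x).card ≤ s := by
  set T := largeCoords s x
  set L1 := ∑ i, ‖x i‖
  by_contra! hs
  have hT : T.Nonempty := Finset.card_pos.mp (by omega)
  have hlt : ∑ _j ∈ T, L1 < ∑ j ∈ T, s * ‖x j‖ :=
    Finset.sum_lt_sum_of_nonempty hT fun j hj => (Finset.mem_filter.mp hj).2
  rw [Finset.sum_const, nsmul_eq_mul, ← Finset.mul_sum] at hlt
  have hle : ∑ j ∈ T, ‖x j‖ ≤ L1 :=
    Finset.sum_le_sum_of_subset_of_nonneg (Finset.subset_univ T) fun i _ _ => norm_nonneg _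
  have hsT : (s : ℝ) ≤ T.card := by exact_mod_cast hs.le
  have hL1 : 0 ≤ L1 := Finset.sum_nonneg fun i _ => norm_nonneg _
  nlinarith

theorem cnormE_restrict_compl_largeCoords_le {s : ℕ} (hs : 0 < s) {r : ℝ≥0∞} (hr : 1 ≤ r)
    (x : Fin n → ℂ) :
    cnormE r (restrict (largeCoords s x)ᶜ x) ≤ (s : ℝ) ^ ((1 / r).toReal - 1) * ∑ i, ‖x i‖ := by
  set L1 := ∑ i, ‖x i‖
  have hs' : (0 : ℝ) < s := by exact_mod_cast hs
  have hL1 : 0 ≤ L1 := Finset.sum_nonneg fun i _ => norm_nonneg _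
  have hsmall : ∀ i, ‖restrict (largeCoords s x)ᶜ x i‖ ≤ L1 / s := fun i => by
    rw [norm_restrict]
    split_ifs with hi
    · rw [le_div_iff₀ hs', mul_comm]
      simpa [largeCoords] using hi
    · positivity
  have hsum : ∑ i, ‖restrict (largeCoords s x)ᶜ x i‖ ≤ L1 := by
    rw [sum_norm_restrict]
    exact Finset.sum_le_sum_of_subset_of_nonneg (Finset.subset_univ _) fun i _ _ => norm_nonneg _
  calc cnormE r (restrict (largeCoords s x)ᶜ x)
      ≤ (L1 / s) ^ (1 - (1 / r).toReal) * L1 ^ (1 / r).toReal := by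
        grw [cnormE_le_rpow_mul_sum_rpow hr (by positivity) hsmall, hsum]
    _ = (s : ℝ) ^ ((1 / r).toReal - 1) * L1 := by
        rw [Real.div_rpow hL1 hs'.le, div_mul_eq_mul_div, ← Real.rpow_add' hL1 (by simp),
          sub_add_cancel, Real.rpow_one, div_eq_mul_inv, mul_comm, ← Real.rpow_neg hs'.le,
          neg_sub]

theorem cnormE_le_rpow_mul_cnormE_restrict_largeCoords_add {s : ℕ} (hs : 0 < s) {r q : ℝ≥0∞}
    (hr : 1 ≤ r) (hrq : r ≤ q) (x : Fin n → ℂ) :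
    cnormE r x ≤ (s : ℝ) ^ ((1 / r).toReal - (1 / q).toReal) *
        cnormE q (restrict (largeCoords s x) x) +
      (s : ℝ) ^ ((1 / r).toReal - 1) * ∑ i, ‖x i‖ := by
  set T := largeCoords s x
  have hcard : (T.card : ℝ) ≤ s := by exact_mod_cast card_largeCoords_le s x
  calc cnormE r x ≤ cnormE r (restrict T x) + cnormE r (restrict Tᶜ x) := by
        conv_lhs => rw [← restrict_add_restrict_compl T x]
        exact cnormE_add_le hr _ _
    _ ≤ (s : ℝ) ^ ((1 / r).toReal - (1 / q).toReal) * cnormE q (restrict T x) +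
        (s : ℝ) ^ ((1 / r).toReal - 1) * ∑ i, ‖x i‖ := by
        have hexp := sub_nonneg.mpr (ENNReal.toReal_one_div_le_toReal_one_div hr hrq)
        have hq := cnormE_nonneg (hr.trans hrq) (restrict T x)
        grw [cnormE_restrict_le_card_rpow_mul hr hrq T x, hcard,
          cnormE_restrict_compl_largeCoords_le hs hr x]

end HeadTail

section WeightedNorm

variable {n : ℕ} {ω : Fin n → ℝ}

theorem wnorm_restrict_add_wnorm_restrict_compl (ω : Fin n → ℝ) (S : Finset (Fin n))
    (x : Fin n → ℂ) : wnorm ω (restrict S x) + wnorm ω (restrict Sᶜ x) = wnorm ω x := by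
  rw [wnorm_restrict, wnorm_restrict, Finset.sum_add_sum_compl, wnorm]

theorem wnorm_restrict_le (hω : ∀ i, 0 ≤ ω i) (S : Finset (Fin n)) (x : Fin n → ℂ) :
    wnorm ω (restrict S x) ≤ wnorm ω x := by
  rw [wnorm_restrict, wnorm]
  exact Finset.sum_le_sum_of_subset_of_nonneg (Finset.subset_univ S) fun i _ _ =>
    mul_nonneg (hω i) (norm_nonneg _)

theorem sum_norm_le_wnorm_div {θ : ℝ} (hθ : 0 < θ) (hω : ∀ i, θ ≤ ω i) (x : Fin n → ℂ) :
    ∑ i, ‖x i‖ ≤ wnorm ω x / θ := by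
  rw [le_div_iff₀ hθ, wnorm, Finset.sum_mul]
  exact Finset.sum_le_sum fun i _ => by rw [mul_comm]; gcongr; exact hω i

theorem wnorm_restrict_le_sum_norm (hω : ∀ i, ω i ≤ 1) (S : Finset (Fin n)) (x : Fin n → ℂ) :
    wnorm ω (restrict S x) ≤ ∑ i ∈ S, ‖x i‖ := by
  rw [wnorm_restrict]
  exact Finset.sum_le_sum fun i _ => mul_le_of_le_one_left (norm_nonneg _) (hω i)

theorem wnorm_restrict_compl_sub_le (hω : ∀ i, 0 ≤ ω i) {x z : Fin n → ℂ}
    (hmin : wnorm ω z ≤ wnorm ω x) (S : Finset (Fin n)) :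
    wnorm ω (restrict Sᶜ (z - x)) ≤ wnorm ω (restrict S (z - x)) + 2 * wnorm ω (restrict Sᶜ x) := by
  rw [← wnorm_restrict_add_wnorm_restrict_compl ω S z,
    ← wnorm_restrict_add_wnorm_restrict_compl ω S x] at hmin
  simp only [wnorm_restrict] at hmin ⊢
  have hS : ∑ i ∈ S, ω i * ‖x i‖ ≤ ∑ i ∈ S, ω i * ‖z i‖ + ∑ i ∈ S, ω i * ‖(z - x) i‖ := by
    rw [← Finset.sum_add_distrib]
    refine Finset.sum_le_sum fun i _ => ?_
    rw [← mul_add]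
    gcongr
    · exact hω i
    · simpa using norm_le_norm_add_norm_sub (z i) (x i)
  have hSc : ∑ i ∈ Sᶜ, ω i * ‖(z - x) i‖ ≤ ∑ i ∈ Sᶜ, ω i * ‖z i‖ + ∑ i ∈ Sᶜ, ω i * ‖x i‖ := by
    rw [← Finset.sum_add_distrib]
    refine Finset.sum_le_sum fun i _ => ?_
    rw [← mul_add]
    gcongr
    · exact hω i
    · exact norm_sub_le _ _
  linarith

theorem wnorm_restrict_compl_support_le (hω : ∀ i, 0 ≤ ω i) (x z : Fin n → ℂ) :
    wnorm ω (restrict (Finset.univ.filter fun i => z i ≠ 0)ᶜ x) ≤ wnorm ω (x - z) := by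
  set S := Finset.univ.filter fun i => z i ≠ 0
  have hx : restrict Sᶜ x = restrict Sᶜ (x - z) := by
    ext i
    by_cases hi : i ∈ S
    · simp [restrict, hi]
    · simp_all [restrict, S]
  rw [hx]
  exact wnorm_restrict_le hω _ _

theorem le_add_mul_sigmaS {s : ℕ} {x : Fin n → ℂ} {u c K : ℝ} (hK : 0 < K)
    (h : ∀ z, CSparse s z → u ≤ c + K * wnorm ω (x - z)) : u ≤ c + K * sigmaS s ω x := by
  have hσ : (u - c) / K ≤ sigmaS s ω x := by
    refine le_csInf ⟨_, 0, by simp [CSparse], rfl⟩ ?_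
    rintro _ ⟨z, hz, rfl⟩
    rw [div_le_iff₀ hK]
    linarith [h z hz]
  rw [div_le_iff₀ hK] at hσ
  linarith

end WeightedNorm

namespace wRNSP

variable {m N : ℕ} {p q : ℝ≥0∞} {ω : Fin N → ℝ} {s : ℕ} {ρ γ : ℝ}
  {A : Matrix (Fin m) (Fin N) ℂ}

theorem sum_norm_le (hA : wRNSP p q ω s ρ γ A) (hq : 1 ≤ q) (hs : 0 < s) (v : Fin N → ℂ)
    {S : Finset (Fin N)} (hS : S.card ≤ s) :
    ∑ i ∈ S, ‖v i‖ ≤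
      ρ * wnorm ω (restrict Sᶜ v) + γ * (s : ℝ) ^ (1 - (1 / q).toReal) * cnormE p (A.mulVec v) := by
  have hexp : 0 ≤ 1 - (1 / q).toReal := sub_nonneg.mpr (ENNReal.toReal_one_div_le_one hq)
  have hcard : (S.card : ℝ) ≤ s := by exact_mod_cast hS
  have hl1 := cnormE_restrict_le_card_rpow_mul le_rfl hq S v
  rw [cnormE_one, sum_norm_restrict, div_one, ENNReal.toReal_one] at hl1
  calc ∑ i ∈ S, ‖v i‖ ≤ (s : ℝ) ^ (1 - (1 / q).toReal) * cnormE q (restrict S v) := by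
        grw [hl1, hcard]
        exact cnormE_nonneg hq _
    _ ≤ (s : ℝ) ^ (1 - (1 / q).toReal) *
          (ρ / (s : ℝ) ^ (1 - (1 / q).toReal) * wnorm ω (restrict Sᶜ v) +
            γ * cnormE p (A.mulVec v)) := by
        gcongr
        exact hA v S hS
    _ = _ := by field_simp

theorem wnorm_sub_le_of_wnorm_le (hA : wRNSP p q ω s ρ γ A) (hq : 1 ≤ q) (hs : 0 < s)
    (hω0 : ∀ i, 0 ≤ ω i) (hω1 : ∀ i, ω i ≤ 1) (hρ0 : 0 ≤ ρ) (hρ1 : ρ ≤ 1)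
    {x z : Fin N → ℂ} (hmin : wnorm ω z ≤ wnorm ω x) {S : Finset (Fin N)} (hS : S.card ≤ s) :
    (1 - ρ) * wnorm ω (z - x) ≤
      2 * γ * (s : ℝ) ^ (1 - (1 / q).toReal) * cnormE p (A.mulVec (z - x)) +
        2 * (1 + ρ) * wnorm ω (restrict Sᶜ x) := by
  have hsplit := wnorm_restrict_add_wnorm_restrict_compl ω S (z - x)
  have hcone := wnorm_restrict_compl_sub_le hω0 hmin S
  have hhead := (wnorm_restrict_le_sum_norm hω1 S (z - x)).trans (hA.sum_norm_le hq hs (z - x) hS)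
  set a := wnorm ω (restrict S (z - x))
  set b := wnorm ω (restrict Sᶜ (z - x))
  have hb : (1 - ρ) * b ≤ γ * (s : ℝ) ^ (1 - (1 / q).toReal) * cnormE p (A.mulVec (z - x)) +
      2 * wnorm ω (restrict Sᶜ x) := by linarith
  have ha := mul_le_mul_of_nonneg_left hhead (sub_nonneg.mpr hρ1)
  nlinarith [mul_le_mul_of_nonneg_left hb hρ0]

theorem cnormE_le (hA : wRNSP p q ω s ρ γ A) (hs : 0 < s) (hω0 : ∀ i, 0 ≤ ω i)
    (hρ0 : 0 ≤ ρ) {r : ℝ≥0∞} (hr : 1 ≤ r) (hrq : r ≤ q) (v : Fin N → ℂ) :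
    cnormE r v ≤ ρ * (s : ℝ) ^ ((1 / r).toReal - 1) * wnorm ω v +
      γ * (s : ℝ) ^ ((1 / r).toReal - (1 / q).toReal) * cnormE p (A.mulVec v) +
        (s : ℝ) ^ ((1 / r).toReal - 1) * ∑ i, ‖v i‖ := by
  set T := largeCoords s v
  have hs' : (0 : ℝ) < s := by exact_mod_cast hs
  have hhead : cnormE q (restrict T v) ≤
      ρ / (s : ℝ) ^ (1 - (1 / q).toReal) * wnorm ω v + γ * cnormE p (A.mulVec v) := by
    grw [hA v T (card_largeCoords_le s v), wnorm_restrict_le hω0]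
  have hpow : (s : ℝ) ^ ((1 / r).toReal - (1 / q).toReal) / (s : ℝ) ^ (1 - (1 / q).toReal) =
      (s : ℝ) ^ ((1 / r).toReal - 1) := by
    rw [← Real.rpow_sub hs', sub_sub_sub_cancel_right]
  calc cnormE r v ≤ (s : ℝ) ^ ((1 / r).toReal - (1 / q).toReal) * cnormE q (restrict T v) +
        (s : ℝ) ^ ((1 / r).toReal - 1) * ∑ i, ‖v i‖ :=
        cnormE_le_rpow_mul_cnormE_restrict_largeCoords_add hs hr hrq v
    _ ≤ (s : ℝ) ^ ((1 / r).toReal - (1 / q).toReal) *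
          (ρ / (s : ℝ) ^ (1 - (1 / q).toReal) * wnorm ω v + γ * cnormE p (A.mulVec v)) +
        (s : ℝ) ^ ((1 / r).toReal - 1) * ∑ i, ‖v i‖ := by grw [hhead]
    _ = _ := by rw [← hpow]; ring

theorem cnormE_sub_le_of_wnorm_le (hA : wRNSP p q ω s ρ γ A) (hq : 1 ≤ q) (hs : 0 < s)
    {θ : ℝ} (hθ : 0 < θ) (hω : ∀ i, ω i ∈ Set.Icc θ 1) (hρ0 : 0 ≤ ρ) (hρ1 : ρ < 1)
    {r : ℝ≥0∞} (hr : 1 ≤ r) (hrq : r ≤ q) {x z : Fin N → ℂ} (hmin : wnorm ω z ≤ wnorm ω x)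
    {S : Finset (Fin N)} (hS : S.card ≤ s) :
    cnormE r (z - x) ≤
      γ * (1 + 2 * ((ρ + θ⁻¹) / (1 - ρ))) * (s : ℝ) ^ ((1 / r).toReal - (1 / q).toReal) *
          cnormE p (A.mulVec (z - x)) +
        2 * (1 + ρ) * ((ρ + θ⁻¹) / (1 - ρ)) * (s : ℝ) ^ ((1 / r).toReal - 1) *
          wnorm ω (restrict Sᶜ x) := by
  have hω0 : ∀ i, 0 ≤ ω i := fun i => hθ.le.trans (hω i).1
  have hs' : (0 : ℝ) < s := by exact_mod_cast hs
  have hW := hA.wnorm_sub_le_of_wnorm_le hq hs hω0 (fun i => (hω i).2) hρ0 hρ1.le hmin hS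
  rw [← le_div_iff₀' (sub_pos.mpr hρ1)] at hW
  have hpow : (s : ℝ) ^ ((1 / r).toReal - 1) * (s : ℝ) ^ (1 - (1 / q).toReal) =
      (s : ℝ) ^ ((1 / r).toReal - (1 / q).toReal) := by
    rw [← Real.rpow_add hs', sub_add_sub_cancel]
  calc cnormE r (z - x)
      ≤ (ρ + θ⁻¹) * (s : ℝ) ^ ((1 / r).toReal - 1) * wnorm ω (z - x) +
          γ * (s : ℝ) ^ ((1 / r).toReal - (1 / q).toReal) * cnormE p (A.mulVec (z - x)) := by
        grw [hA.cnormE_le hs hω0 hρ0 hr hrq, sum_norm_le_wnorm_div hθ (fun i => (hω i).1)]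
        exact le_of_eq (by ring)
    _ ≤ _ := by
        grw [hW]
        rw [← hpow]
        apply le_of_eq
        field_simp
        ring

end wRNSP

/-- stable and robust recovery for ω-BPDQ_p under ω-RNSP_{p,q},
for all 1 ≤ r ≤ q, with p, q ∈ [1,∞]. -/
theorem wBPDQ_recovery_RNSP (θ ρ γ : ℝ) (hθ : θ ∈ Set.Ioo (0:ℝ) 1)
    (hρ : ρ ∈ Set.Ioo (0:ℝ) 1) (hγ : 0 < γ) :
    ∃ A' B' : ℝ, ∀ (p q : ℝ≥0∞), 1 ≤ p → 1 ≤ q → ∀ (s : ℕ), 2 ≤ s →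
      ∀ (m N : ℕ) (A : Matrix (Fin m) (Fin N) ℂ) (ω : Fin N → ℝ),
        (∀ i, ω i ∈ Set.Icc θ 1) → wRNSP p q ω s ρ γ A →
      ∀ (r : ℝ≥0∞), 1 ≤ r → r ≤ q →
      ∀ (x xhat : Fin N → ℂ) (y : Fin m → ℂ) (ε : ℝ), 0 ≤ ε →
        cnormE p (A.mulVec x - y) ≤ ε →
        cnormE p (A.mulVec xhat - y) ≤ ε →
        (∀ z : Fin N → ℂ, cnormE p (A.mulVec z - y) ≤ ε → wnorm ω xhat ≤ wnorm ω z) →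
        cnormE r (xhat - x) ≤
          A' * (s : ℝ) ^ ((1 / r).toReal - (1 / q).toReal) * ε +
            B' * (s : ℝ) ^ ((1 / r).toReal - 1) * sigmaS s ω x := by
  obtain ⟨hθ0, -⟩ := hθ
  obtain ⟨hρ0, hρ1⟩ := hρ
  set K := (ρ + θ⁻¹) / (1 - ρ)
  have hK : 0 < K := div_pos (by positivity) (sub_pos.mpr hρ1)
  refine ⟨2 * (γ * (1 + 2 * K)), 2 * (1 + ρ) * K, ?_⟩
  intro p q hp hq s hs m N A ω hω hA r hr hrq x xhat y ε hε hx hxhat hmin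
  have hs0 : 0 < s := by omega
  have hω0 : ∀ i, 0 ≤ ω i := fun i => hθ0.le.trans (hω i).1
  have hres : cnormE p (A.mulVec (xhat - x)) ≤ 2 * ε := by
    rw [Matrix.mulVec_sub, ← sub_sub_sub_cancel_right _ _ y]
    linarith [cnormE_sub_le hp (A.mulVec xhat - y) (A.mulVec x - y)]
  refine le_add_mul_sigmaS (by positivity) fun z hz => ?_
  calc cnormE r (xhat - x)
      ≤ γ * (1 + 2 * K) * (s : ℝ) ^ ((1 / r).toReal - (1 / q).toReal) *
            cnormE p (A.mulVec (xhat - x)) +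
          2 * (1 + ρ) * K * (s : ℝ) ^ ((1 / r).toReal - 1) *
            wnorm ω (restrict (Finset.univ.filter fun i => z i ≠ 0)ᶜ x) :=
        hA.cnormE_sub_le_of_wnorm_le hq hs0 hθ0 hω hρ0.le hρ1 hr hrq (hmin x hx) hz
    _ ≤ _ := by
        grw [hres, wnorm_restrict_compl_support_le hω0 x z]
        exact le_of_eq (by ring)

end
end
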